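/- Let p be a prime, ν ≥ 1, and χ a primitive Dirichlet character modulo p^ν. For integers γ, δ ≥ 0 with γ + δ ≥ ν, the sum S = Σ*_{d mod p^{γ+δ}, (d−1, p^{γ+δ}) = p^γ} χ(d) equals: 1 if δ = 0 and γ ≥ ν; p^δ − p^{δ−1} if δ > 0 and γ ≥ ν; −p^{δ−1} if δ > 0 and γ = ν−1; and 0 if δ > 0 and γ < ν−1. -/

import Mathlib

/-!
Put `L = γ + δ` and let `T k` be the sum of `χ d` over `d < p ^ L` with `d ≡ 1 [MOD p ^ k]`.
As `χ` vanishes on non-units, `S = T γ - T (γ + 1)` when `δ > 0` and `S = T γ` when `δ = 0`.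
For `ν ≤ k` the character is identically `1` on the summation set, so `T k = p ^ (L - k)`.
For `k < ν` primitivity provides a unit `u ≡ 1 [MOD p ^ k]` with `χ u ≠ 1`; multiplication by `u`
permutes the summation set, so `T k = χ u * T k`, whence `T k = 0`.
-/

open Finset

theorem Finset.sum_range_natCast_eq_sum_zmod {M : Type*} [AddCommMonoid M] (n : ℕ) [NeZero n]
    (f : ZMod n → M) : ∑ d ∈ range n, f d = ∑ x : ZMod n, f x :=
  sum_nbij' Nat.cast ZMod.val (fun _ _ ↦ mem_univ _) (fun x _ ↦ mem_range.2 x.val_lt)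
    (fun _ hd ↦ ZMod.val_cast_of_lt (mem_range.1 hd)) (fun x _ ↦ ZMod.natCast_zmod_val x)
    (fun _ _ ↦ rfl)

theorem Finset.sum_filter_and_not_eq_sub {ι M : Type*} [AddCommGroup M] (s : Finset ι)
    {P Q : ι → Prop} [DecidablePred P] [DecidablePred Q] (hQP : ∀ x ∈ s, Q x → P x)
    (f : ι → M) :
    ∑ x ∈ s with P x ∧ ¬ Q x, f x = ∑ x ∈ s with P x, f x - ∑ x ∈ s with Q x, f x := by
  rw [eq_sub_iff_add_eq, ← sum_filter_add_sum_filter_not {x ∈ s | P x} Q, filter_filter,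
    filter_filter, add_comm, filter_congr fun x hx ↦ and_iff_right_of_imp (hQP x hx)]

theorem Int.pow_dvd_iff_le_of_gcd_eq {p : ℕ} (hp : p.Prime) {m : ℤ} {L j : ℕ}
    (hj : m.gcd ((p ^ L : ℕ) : ℤ) = p ^ j) {i : ℕ} (hi : i ≤ L) :
    (p : ℤ) ^ i ∣ m ↔ i ≤ j := by
  have hpi : (p : ℤ) ^ i ∣ ((p ^ L : ℕ) : ℤ) := by exact_mod_cast pow_dvd_pow p hi
  rw [← Nat.pow_dvd_pow_iff_le_right hp.one_lt, ← hj, Int.dvd_gcd_iff]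
  push_cast
  exact (and_iff_left hpi).symm

theorem Int.gcd_prime_pow_eq_pow_iff {p : ℕ} (hp : p.Prime) (m : ℤ) {γ L : ℕ} (hγ : γ ≤ L) :
    m.gcd ((p ^ L : ℕ) : ℤ) = p ^ γ ↔
      (p : ℤ) ^ γ ∣ m ∧ (γ < L → ¬ (p : ℤ) ^ (γ + 1) ∣ m) := by
  obtain ⟨j, hjL, hj⟩ := (Nat.dvd_prime_pow hp).1 <|
    Int.natCast_dvd_natCast.1 (m.gcd_dvd_right ((p ^ L : ℕ) : ℤ))
  rw [hj, (Nat.pow_right_injective hp.two_le).eq_iff, Int.pow_dvd_iff_le_of_gcd_eq hp hj hγ]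
  refine ⟨?_, fun ⟨hγj, hnext⟩ ↦ ?_⟩
  · rintro rfl
    exact ⟨le_rfl, fun h ↦ by rw [Int.pow_dvd_iff_le_of_gcd_eq hp hj h]; omega⟩
  · rcases hγ.lt_or_eq with h | rfl
    · have := hnext h
      rw [Int.pow_dvd_iff_le_of_gcd_eq hp hj h] at this
      omega
    · omega

theorem Nat.modEq_one_iff_dvd_sub_one (d k : ℕ) : d ≡ 1 [MOD k] ↔ (k : ℤ) ∣ (d : ℤ) - 1 := by
  rw [Nat.ModEq.comm, Nat.modEq_iff_dvd, Nat.cast_one]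

theorem ZMod.natCast_eq_one_iff_modEq {k : ℕ} (d : ℕ) : (d : ZMod k) = 1 ↔ d ≡ 1 [MOD k] := by
  rw [← ZMod.natCast_eq_natCast_iff, Nat.cast_one]

namespace DirichletCharacter

variable {R : Type*}

theorem IsPrimitive.dvd_of_factorsThrough [CommMonoidWithZero R] {n d : ℕ} [NeZero n]
    {χ : DirichletCharacter R n} (hχ : χ.IsPrimitive) (h : χ.FactorsThrough d) : n ∣ d :=
  hχ ▸ χ.conductor_dvd_of_mem_conductorSet h

theorem sum_castHom_eq_one_eq_zero [CommRing R] [NoZeroDivisors R] {n m k : ℕ} [NeZero n]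
    (hmn : m ∣ n) (hkm : k ∣ m) {χ : DirichletCharacter R m} (hχ : ¬ χ.FactorsThrough k) :
    ∑ x : ZMod n with ZMod.castHom (hkm.trans hmn) (ZMod k) x = 1,
      χ (ZMod.castHom hmn (ZMod m) x) = 0 := by
  have : NeZero m := ⟨fun h ↦ NeZero.ne n (Nat.eq_zero_of_zero_dvd (h ▸ hmn))⟩
  obtain ⟨v, hv, hχv⟩ :=
    SetLike.not_le_iff_exists.1 (mt (factorsThrough_iff_ker_unitsMap hkm).2 hχ)
  obtain ⟨u, rfl⟩ := ZMod.unitsMap_surjective hmn v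
  have hu : ZMod.castHom (hkm.trans hmn) (ZMod k) u = 1 := by
    have := congrArg Units.val (MonoidHom.mem_ker.1 hv)
    rwa [← MonoidHom.comp_apply, ZMod.unitsMap_comp, ZMod.unitsMap_val,
      ← ZMod.castHom_apply] at this
  set T := ∑ x : ZMod n with ZMod.castHom (hkm.trans hmn) (ZMod k) x = 1,
    χ (ZMod.castHom hmn (ZMod m) x)
  have hshift : χ (ZMod.castHom hmn (ZMod m) u) * T = T := by
    simp only [T, mul_sum, sum_filter]
    refine Fintype.sum_equiv (Units.mulLeft u) _ _ fun x ↦ ?_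
    simp only [Units.mulLeft_apply, map_mul, hu, one_mul]
    split_ifs <;> simp
  have hχu : χ (ZMod.castHom hmn (ZMod m) u) ≠ 1 := fun h ↦
    hχv <| MonoidHom.mem_ker.2 <| Units.ext <| by
      rw [MulChar.coe_toUnitHom, ZMod.unitsMap_val, ← ZMod.castHom_apply (h := hmn), h,
        Units.val_one]
  have : (χ (ZMod.castHom hmn (ZMod m) u) - 1) * T = 0 := by
    rw [sub_mul, hshift, one_mul, sub_self]
  exact (mul_eq_zero.1 this).resolve_left (sub_ne_zero.2 hχu)

theorem sum_range_filter_modEq_one_eq_zero [CommRing R] [NoZeroDivisors R] {n m k : ℕ}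
    [NeZero n] (hmn : m ∣ n) (hkm : k ∣ m) {χ : DirichletCharacter R m}
    (hχ : ¬ χ.FactorsThrough k) : ∑ d ∈ range n with d ≡ 1 [MOD k], χ d = 0 := by
  rw [← sum_castHom_eq_one_eq_zero hmn hkm hχ, sum_filter, sum_filter,
    ← sum_range_natCast_eq_sum_zmod]
  refine sum_congr rfl fun d _ ↦ ?_
  rw [map_natCast (ZMod.castHom _ (ZMod k)), map_natCast (ZMod.castHom hmn (ZMod m))]
  simp_rw [ZMod.natCast_eq_one_iff_modEq]

theorem sum_range_filter_modEq_one_of_dvd [CommSemiring R] {n m k : ℕ} (hk : 0 < k)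
    (hmk : m ∣ k) (hkn : k ∣ n) (χ : DirichletCharacter R m) :
    ∑ d ∈ range n with d ≡ 1 [MOD k], χ d = (n / k : ℕ) := by
  have hχ : ∀ d ∈ {d ∈ range n | d ≡ 1 [MOD k]}, χ d = 1 := fun d hd ↦ by
    rw [(ZMod.natCast_eq_natCast_iff d 1 m).2 ((mem_filter.1 hd).2.of_dvd hmk), Nat.cast_one,
      map_one]
  rw [sum_congr rfl hχ, sum_const, ← Nat.count_eq_card_filter_range, Nat.count_modEq_card n hk,
    Nat.mod_eq_zero_of_dvd hkn, if_neg (Nat.not_lt_zero _), add_zero, nsmul_one]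

variable {p ν : ℕ}

theorem IsPrimitive.sum_range_pow_filter_modEq_one [CommRing R] [NoZeroDivisors R]
    (hp : p.Prime) {χ : DirichletCharacter R (p ^ ν)} (hχ : χ.IsPrimitive) {L k : ℕ}
    (hνL : ν ≤ L) (hkL : k ≤ L) :
    ∑ d ∈ range (p ^ L) with d ≡ 1 [MOD p ^ k], χ d = if ν ≤ k then (p : R) ^ (L - k) else 0 := by
  have : NeZero p := ⟨hp.ne_zero⟩
  split_ifs with hνk
  · rw [sum_range_filter_modEq_one_of_dvd (pow_pos hp.pos k) (pow_dvd_pow p hνk)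
      (pow_dvd_pow p hkL), Nat.pow_div hkL hp.pos, Nat.cast_pow]
  · refine sum_range_filter_modEq_one_eq_zero (pow_dvd_pow p hνL) (pow_dvd_pow p (by omega))
      fun h ↦ hνk ?_
    exact (Nat.pow_dvd_pow_iff_le_right hp.one_lt).1 (hχ.dvd_of_factorsThrough h)

theorem sum_range_ite_coprime_and_gcd_sub_one [CommSemiring R] (hp : p.Prime) (hν : 1 ≤ ν)
    (χ : DirichletCharacter R (p ^ ν)) {γ L : ℕ} (hνL : ν ≤ L) (hγL : γ ≤ L) :
    ∑ d ∈ range (p ^ L),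
        (if d.Coprime (p ^ L) ∧ Int.gcd ((d : ℤ) - 1) ((p ^ L : ℕ) : ℤ) = p ^ γ then
          χ d else 0) =
      ∑ d ∈ range (p ^ L) with d ≡ 1 [MOD p ^ γ] ∧ (γ < L → ¬ d ≡ 1 [MOD p ^ (γ + 1)]), χ d := by
  rw [sum_filter]
  refine sum_congr rfl fun d _ ↦ ?_
  have hgcd : Int.gcd ((d : ℤ) - 1) ((p ^ L : ℕ) : ℤ) = p ^ γ ↔
      d ≡ 1 [MOD p ^ γ] ∧ (γ < L → ¬ d ≡ 1 [MOD p ^ (γ + 1)]) := by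
    rw [Int.gcd_prime_pow_eq_pow_iff hp _ hγL, Nat.modEq_one_iff_dvd_sub_one,
      Nat.modEq_one_iff_dvd_sub_one]
    push_cast
    rfl
  by_cases hcop : d.Coprime (p ^ L)
  · simp only [hgcd, and_iff_right hcop]
  · have hχd : χ d = 0 := MulChar.map_nonunit χ fun h ↦ hcop <| by
      rw [Nat.coprime_pow_right_iff (by omega), ← Nat.coprime_pow_right_iff hν]
      exact (ZMod.isUnit_iff_coprime d _).1 h
    simp only [hcop, false_and, hχd, ite_self]

end DirichletCharacter

/-- Local computation at primes `p ∣ N`: for a primitive character `χ` mod `p^ν`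
and `γ + δ ≥ ν`, the sum `S = Σ*_{d mod p^{γ+δ}, (d−1, p^{γ+δ}) = p^γ} χ(d)`
equals `1` if `δ = 0, γ ≥ ν`; `p^δ − p^{δ−1}` if `δ > 0, γ ≥ ν`; `−p^{δ−1}` if
`δ > 0, γ = ν − 1`; and `0` if `δ > 0, γ < ν − 1`. -/
theorem local_sum_primitive_character
    (p ν : ℕ) (hp : p.Prime) (hν : 1 ≤ ν)
    (χ : DirichletCharacter ℂ (p ^ ν)) (hχ : χ.IsPrimitive)
    (γ δ : ℕ) (hγδ : ν ≤ γ + δ)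
    (S : ℂ)
    (hS : S = ∑ d ∈ Finset.range (p ^ (γ + δ)),
        if Nat.Coprime d (p ^ (γ + δ)) ∧
            Int.gcd ((d : ℤ) - 1) ((p ^ (γ + δ) : ℕ) : ℤ) = p ^ γ then
          χ ((d : ℕ) : ZMod (p ^ ν)) else 0) :
    (δ = 0 → ν ≤ γ → S = 1) ∧
    (0 < δ → ν ≤ γ → S = (p : ℂ) ^ δ - (p : ℂ) ^ (δ - 1)) ∧
    (0 < δ → γ = ν - 1 → S = -(p : ℂ) ^ (δ - 1)) ∧
    (0 < δ → γ < ν - 1 → S = 0) := by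
  have hT := fun k (hk : k ≤ γ + δ) ↦ hχ.sum_range_pow_filter_modEq_one hp hγδ hk
  rw [DirichletCharacter.sum_range_ite_coprime_and_gcd_sub_one hp hν χ hγδ
    (Nat.le_add_right γ δ)] at hS
  have hdiff : 0 < δ → S = (if ν ≤ γ then (p : ℂ) ^ δ else 0) -
      (if ν ≤ γ + 1 then (p : ℂ) ^ (δ - 1) else 0) := fun hδ ↦ by
    simp only [show γ < γ + δ by omega, true_imp_iff] at hS
    rw [hS, sum_filter_and_not_eq_sub _ fun d _ h ↦ h.of_dvd (pow_dvd_pow p γ.le_succ),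
      hT γ (by omega), hT (γ + 1) (by omega), show γ + δ - γ = δ by omega,
      show γ + δ - (γ + 1) = δ - 1 by omega]
  refine ⟨fun hδ hγ ↦ ?_, fun hδ hγ ↦ ?_, fun hδ hγ ↦ ?_, fun hδ hγ ↦ ?_⟩
  · subst hδ
    simp only [add_zero, lt_irrefl, false_imp_iff, and_true] at hS hT
    rw [hS, hT γ le_rfl, if_pos hγ, Nat.sub_self, pow_zero]
  · rw [hdiff hδ, if_pos hγ, if_pos (by omega)]
  · rw [hdiff hδ, if_neg (by omega), if_pos (by omega), zero_sub]
  · rw [hdiff hδ, if_neg (by omega), if_neg (by omega), sub_zero]
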